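/- arXiv:2104.10458 — 3 statements merged into one kernel-verified Lean document; each statement's English description precedes it below -/
import Mathlib

section
/- For every f ∈ L¹(X, μ) and μ-a.e. x ∈ E, lim_{N→∞} (1/R_{E,N,m}(x)) ∑_{k=1}^{N+m(N,E,x)} f(T^{k−1}(x)) = ∫_X f dμ. -/
open MeasureTheory Filter Set Topology Asymptotics

open scoped ENNReal NNReal

noncomputable section

namespace Paper

variable {X : Type*}

/-- First return time to `E` under `T` (`0` if the orbit never returns to `E`). -/
def retTime (T : X → X) (E : Set X) (x : X) : ℕ :=
  sInf {k : ℕ | 0 < k ∧ T^[k] x ∈ E}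

/-- The induced map on `E`. -/
def indMap (T : X → X) (E : Set X) (x : X) : X :=
  T^[retTime T E x] x

/-- Level sets `A_n` of the first return time. -/
def levelSet (T : X → X) (E : Set X) (n : ℕ) : Set X :=
  {x ∈ E | retTime T E x = n}

/-- Super-level sets `A_{>n}` of the first return time. -/
def superLevelSet (T : X → X) (E : Set X) (n : ℕ) : Set X :=
  {x ∈ E | n < retTime T E x}

/-- The sets `A_{≥ n}`. -/
def geLevelSet (T : X → X) (E : Set X) (n : ℕ) : Set X :=
  {x ∈ E | n ≤ retTime T E x}

/-- Level sets `E_n` of the hitting time of `E`. -/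
def hitLevelSet (T : X → X) (E : Set X) (n : ℕ) : Set X :=
  {x | T^[n] x ∈ E ∧ ∀ k < n, T^[k] x ∉ E}

/-- The induced observable `f^E`. -/
def inducedObs (T : X → X) (E : Set X) (f : X → ℝ) (x : X) : ℝ :=
  ∑ k ∈ Finset.range (retTime T E x), f (T^[k] x)

/-- Birkhoff sums `S_N f(x) = ∑_{k=1}^N f(T^{k-1} x)`. -/
def birkhoff (T : X → X) (f : X → ℝ) (N : ℕ) (x : X) : ℝ :=
  ∑ k ∈ Finset.range N, f (T^[k] x)

/-- Number of visits to `E` up to time `N`: `R_{E,N}(x) = ∑_{k=1}^{N+1} 1_E(T^{k-1} x)`. -/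
def visits (T : X → X) (E : Set X) (N : ℕ) (x : X) : ℕ :=
  ∑ k ∈ Finset.range (N + 1), E.indicator (fun _ => (1 : ℕ)) (T^[k] x)

/-- The longest excursion out of `E` beginning in the first `N` steps, `m(N,E,x)`. -/
def excursionM (T : X → X) (E : Set X) (N : ℕ) (x : X) : ℕ :=
  1 + sSup {k : ℕ | 1 ≤ k ∧ ∃ ℓ, 1 ≤ ℓ ∧ ℓ ≤ N + 1 ∧ ∀ j < k, T^[ℓ + j] x ∉ E}

/-- The longest excursion out of `E` seen up to time `N`, `w(N,E,x)`. -/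
def excursionW (T : X → X) (E : Set X) (N : ℕ) (x : X) : ℕ :=
  1 + sSup {k : ℕ | 1 ≤ k ∧ ∃ ℓ, 1 ≤ ℓ ∧ ℓ ≤ N - k ∧ ∀ j < k, T^[ℓ + j] x ∉ E}

/-- `R_{E,N,m}(x) = R_{E,N+m(N,E,x)}(x)`. -/
def visitsM (T : X → X) (E : Set X) (N : ℕ) (x : X) : ℕ :=
  visits T E (N + excursionM T E N x) x

/-- Time of the `N`-th return to `E`, `τ_{E,x}(N)`. -/
def tauRet (T : X → X) (E : Set X) (x : X) (N : ℕ) : ℕ :=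
  ∑ k ∈ Finset.range N, retTime T E ((indMap T E)^[k] x)

/-- `max_{1 ≤ k ≤ N} φ_E(T_E^{k-1} x)`. -/
def maxRet (T : X → X) (E : Set X) (x : X) (N : ℕ) : ℕ :=
  (Finset.range N).sup (fun k => retTime T E ((indMap T E)^[k] x))

/-- The trimmed return time sum `τ¹_{E,x}(N)`. -/
def tauRetTrim (T : X → X) (E : Set X) (x : X) (N : ℕ) : ℕ :=
  tauRet T E x N - maxRet T E x N

/-- The second maximum of `{φ_E(T_E^{k-1} x) : k = 1, …, n}` (it may coincide
with the maximum in case of equality). -/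
def secondMaxRet (T : X → X) (E : Set X) (x : X) (n : ℕ) : ℕ :=
  sSup {v : ℕ | ∃ k₁ < n, ∃ k₂ < n, k₁ ≠ k₂ ∧
    v = min (retTime T E ((indMap T E)^[k₁] x)) (retTime T E ((indMap T E)^[k₂] x))}

/-- The sequence of random variables `(φ_E ∘ T_E^{n-1})_{n ≥ 1}` (indexed from `0`). -/
def retSeq (T : X → X) (E : Set X) (n : ℕ) (x : X) : ℝ :=
  (retTime T E ((indMap T E)^[n] x) : ℝ)

/-- The σ-algebra generated by the random variables `Y_i`, `i ∈ s`. -/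
def blockSigma {Ω : Type*} (Y : ℕ → Ω → ℝ) (s : Set ℕ) : MeasurableSpace Ω :=
  ⨆ i ∈ s, MeasurableSpace.comap (Y i) inferInstance

/-- The ψ-mixing coefficient `ψ(n)` of the sequence `(Y_n)` on `(Ω, P)`. -/
def psiCoeff {Ω : Type*} [MeasurableSpace Ω] (P : Measure Ω) (Y : ℕ → Ω → ℝ) (n : ℕ) : ℝ :=
  sSup {r : ℝ | ∃ j : ℕ, ∃ B C : Set Ω,
    MeasurableSet[blockSigma Y (Set.Iic j)] B ∧
    MeasurableSet[blockSigma Y (Set.Ici (j + n))] C ∧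
    0 < P B ∧ 0 < P C ∧
    r = |(P (B ∩ C)).toReal / ((P B).toReal * (P C).toReal) - 1|}

/-- `(Y_n)` is ψ-mixing: the coefficient `ψ(n)` tends to `0`. -/
def PsiMixing {Ω : Type*} [MeasurableSpace Ω] (P : Measure Ω) (Y : ℕ → Ω → ℝ) : Prop :=
  Tendsto (psiCoeff P Y) atTop (𝓝 0)

/-- The normalising sequence `α(n) = n / ∑_{j=0}^{n-1} μ(A_{>j})`. -/
def alphaSeq [MeasurableSpace X] (μ : Measure X) (T : X → X) (E : Set X) (n : ℕ) : ℝ :=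
  (n : ℝ) / ∑ j ∈ Finset.range n, (μ (superLevelSet T E j)).toReal

/-- `q(t) = min {j ∈ ℕ : μ(A_{>j}) ≤ 1/t}`. -/
def qFun [MeasurableSpace X] (μ : Measure X) (T : X → X) (E : Set X) (t : ℝ) : ℕ :=
  sInf {j : ℕ | 1 ≤ j ∧ (μ (superLevelSet T E j)).toReal ≤ 1 / t}

/-- `ξ(n) = q(α(n) log α(n) log²(log α(n))) / n`. -/
def xiFun [MeasurableSpace X] (μ : Measure X) (T : X → X) (E : Set X) (n : ℕ) : ℝ :=
  (qFun μ T E (alphaSeq μ T E n * Real.log (alphaSeq μ T E n) *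
      Real.log (Real.log (alphaSeq μ T E n)) ^ 2) : ℝ) / n

/-- Slow variation at infinity. -/
def SlowlyVarying (L : ℝ → ℝ) : Prop :=
  ∀ r : ℝ, 0 < r → Tendsto (fun x => L (r * x) / L x) atTop (𝓝 1)

/-- Normalised slow variation (Karamata representation with constant `c`). -/
def NormalisedSlowlyVarying (L : ℝ → ℝ) : Prop :=
  ∃ (C κ : ℝ) (η : ℝ → ℝ), 0 ≤ κ ∧ Tendsto η atTop (𝓝 (0 : ℝ)) ∧
    ∀ x, κ ≤ x → L x = C * Real.exp (∫ t in κ..x, η t / t)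

/-- `ℓ` is super-slowly varying at infinity with rate function `h`. -/
def SuperSlowlyVarying (ℓ h : ℝ → ℝ) : Prop :=
  ∀ ε : ℝ, 0 < ε → ∃ M : ℝ, ∀ x : ℝ, M ≤ x → ∀ δ ∈ Set.Icc (0 : ℝ) 1,
    |ℓ (x * h x ^ δ) / ℓ x - 1| < ε

/-- `Γ(t) = min {k ∈ ℕ : k L(k) > t}` for induced observables of the form `n L(n)`. -/
def gammaFun (L : ℝ → ℝ) (t : ℝ) : ℕ :=
  sInf {k : ℕ | 1 ≤ k ∧ t < (k : ℝ) * L k}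

/-- `ℓ(t) = ∑_{k=0}^{⌊t⌋} μ(A_{≥ Γ(k)})`. -/
def ellFun [MeasurableSpace X] (μ : Measure X) (T : X → X) (E : Set X) (L : ℝ → ℝ)
    (t : ℝ) : ℝ :=
  ∑ k ∈ Finset.range (⌊t⌋₊ + 1), (μ (geLevelSet T E (gammaFun L (k : ℝ)))).toReal

/-- `ℓ(t) = ∑_{k=0}^{⌊t⌋} μ(A_{≥ k})`. -/
def ellSimple [MeasurableSpace X] (μ : Measure X) (T : X → X) (E : Set X) (t : ℝ) : ℝ :=
  ∑ k ∈ Finset.range (⌊t⌋₊ + 1), (μ (geLevelSet T E k)).toReal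

/-- The sum of the `r` largest entries among `g 0, …, g (N-1)`. -/
def topRSum (g : ℕ → ℝ) (N r : ℕ) : ℝ :=
  sSup {v : ℝ | ∃ s : Finset ℕ, s ⊆ Finset.range N ∧ s.card = r ∧ v = ∑ k ∈ s, g k}

/-- The lightly trimmed sum `S_N^r`. -/
def trimmedSum (g : ℕ → ℝ) (N r : ℕ) : ℝ :=
  (∑ k ∈ Finset.range N, g k) - topRSum g N r

/-- The `r`-th maximum among `g 0, …, g (N-1)`. -/
def kthMax (g : ℕ → ℝ) (N r : ℕ) : ℝ :=
  sSup {v : ℝ | ∃ s : Finset ℕ, s ⊆ Finset.range N ∧ s.card = r ∧ ∀ k ∈ s, v ≤ g k}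

/-- Assumption (ii): `∑_n n μ(A_{>n})² / (∑_{j=0}^{n-1} μ(A_{>j}))² < ∞`. -/
def AssumptionII [MeasurableSpace X] (μ : Measure X) (T : X → X) (E : Set X) : Prop :=
  Summable (fun n : ℕ => (n : ℝ) * (μ (superLevelSet T E n)).toReal ^ 2 /
    (∑ j ∈ Finset.range n, (μ (superLevelSet T E j)).toReal) ^ 2)


/-!
Hopf's ratio ergodic theorem for the indicator of `E`, composed with `N ↦ N + m(N,E,x) → ∞`;
the extra visit counted by `R_{E,N,m}` is harmless because the number of visits tends to infinity.

The ratio theorem comes from the maximal ergodic theorem: if `∫ h < 0`, the set where the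
Birkhoff sums of `h` are unbounded above is `T`-invariant, hence null or conull by ergodicity,
and on a conull such set the maximal ergodic theorem would give `∫ h ≥ 0`. Applied to
`h = f - c g` with `c > ∫ f / ∫ g`, this bounds `S_n f / S_n g` by `c + O(1 / S_n g)`.
-/

section MaximalErgodic

variable {T : X → X} {f : X → ℝ}

/-- `maxBirkhoffSum T f N x = max_{1 ≤ n ≤ N + 1} birkhoffSum T f n x`. -/
def maxBirkhoffSum (T : X → X) (f : X → ℝ) : ℕ → X → ℝ
  | 0 => f
  | N + 1 => fun x => f x + max 0 (maxBirkhoffSum T f N (T x))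

theorem birkhoffSum_succ_le_maxBirkhoffSum {n N : ℕ} (hn : n ≤ N) (x : X) :
    birkhoffSum T f (n + 1) x ≤ maxBirkhoffSum T f N x := by
  induction N generalizing n x with
  | zero =>
    obtain rfl : n = 0 := by omega
    simp [maxBirkhoffSum]
  | succ N ih =>
    rcases n with _ | n
    · simp [maxBirkhoffSum]
    · rw [birkhoffSum_succ']
      exact add_le_add le_rfl (le_max_of_le_right (ih (by omega) (T x)))

theorem exists_birkhoffSum_succ_eq_maxBirkhoffSum (N : ℕ) (x : X) :
    ∃ n ≤ N, birkhoffSum T f (n + 1) x = maxBirkhoffSum T f N x := by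
  induction N generalizing x with
  | zero => exact ⟨0, le_rfl, by simp [maxBirkhoffSum]⟩
  | succ N ih =>
    rcases le_or_gt (maxBirkhoffSum T f N (T x)) 0 with hle | hpos
    · exact ⟨0, by omega, by simp [maxBirkhoffSum, max_eq_left hle]⟩
    · obtain ⟨n, hn, heq⟩ := ih (T x)
      refine ⟨n + 1, by omega, ?_⟩
      rw [birkhoffSum_succ', heq]
      simp [maxBirkhoffSum, max_eq_right hpos.le]

theorem maxBirkhoffSum_le_succ (N : ℕ) (x : X) :
    maxBirkhoffSum T f N x ≤ maxBirkhoffSum T f (N + 1) x := by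
  obtain ⟨n, hn, heq⟩ := exists_birkhoffSum_succ_eq_maxBirkhoffSum (T := T) (f := f) N x
  rw [← heq]
  exact birkhoffSum_succ_le_maxBirkhoffSum (by omega) x

variable [MeasurableSpace X] {μ : Measure X}

theorem measurable_maxBirkhoffSum (hT : Measurable T) (hf : Measurable f) (N : ℕ) :
    Measurable (maxBirkhoffSum T f N) := by
  induction N with
  | zero => exact hf
  | succ N ih => exact hf.add (measurable_const.max (ih.comp hT))

theorem integrable_maxBirkhoffSum (hT : MeasurePreserving T μ μ) (hf : Integrable f μ)
    (N : ℕ) : Integrable (maxBirkhoffSum T f N) μ := by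
  induction N with
  | zero => exact hf
  | succ N ih =>
    exact hf.add ((integrable_zero X ℝ μ).sup (hT.integrable_comp_of_integrable ih))

theorem setIntegral_maxBirkhoffSum_pos_nonneg (hT : MeasurePreserving T μ μ)
    (hf : Measurable f) (hfi : Integrable f μ) (N : ℕ) :
    0 ≤ ∫ x in {x | 0 < maxBirkhoffSum T f N x}, f x ∂μ := by
  set B := {x | 0 < maxBirkhoffSum T f N x}
  set P : X → ℝ := fun x => max 0 (maxBirkhoffSum T f N x)
  have hP : Integrable P μ := (integrable_zero X ℝ μ).sup (integrable_maxBirkhoffSum hT hfi N)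
  have hPT : Integrable (P ∘ T) μ := hT.integrable_comp_of_integrable hP
  -- on `B`, `P = maxBirkhoffSum T f N ≤ maxBirkhoffSum T f (N + 1) = f + P ∘ T`
  have hle : ∀ x ∈ B, P x - P (T x) ≤ f x := fun x hx => by
    replace hx : 0 < maxBirkhoffSum T f N x := hx
    have := maxBirkhoffSum_le_succ (T := T) (f := f) N x
    simp only [P, maxBirkhoffSum, max_eq_right hx.le] at this ⊢
    linarith
  have hP_B : ∫ x in B, P x ∂μ = ∫ x, P x ∂μ :=
    setIntegral_eq_integral_of_forall_compl_eq_zero fun x hx => max_eq_left (not_lt.mp hx)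
  have hPT_B : ∫ x in B, P (T x) ∂μ ≤ ∫ x, P (T x) ∂μ :=
    setIntegral_le_integral hPT (.of_forall fun _ => le_max_left _ _)
  have hPT_eq : ∫ x, P (T x) ∂μ = ∫ x, P x ∂μ := by
    rw [← integral_map hT.aemeasurable (by rw [hT.map_eq]; exact hP.aestronglyMeasurable),
      hT.map_eq]
  calc 0 ≤ ∫ x in B, P x ∂μ - ∫ x in B, P (T x) ∂μ := by linarith
    _ = ∫ x in B, (P x - P (T x)) ∂μ := (integral_sub hP.integrableOn hPT.integrableOn).symm
    _ ≤ ∫ x in B, f x ∂μ := setIntegral_mono_on (hP.integrableOn.sub hPT.integrableOn)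
        hfi.integrableOn (measurableSet_lt measurable_const
          (measurable_maxBirkhoffSum hT.measurable hf N)) hle

theorem setIntegral_exists_birkhoffSum_pos_nonneg (hT : MeasurePreserving T μ μ)
    (hf : Measurable f) (hfi : Integrable f μ) :
    0 ≤ ∫ x in {x | ∃ n, 0 < birkhoffSum T f (n + 1) x}, f x ∂μ := by
  have hunion : {x | ∃ n, 0 < birkhoffSum T f (n + 1) x} =
      ⋃ N, {x | 0 < maxBirkhoffSum T f N x} := by
    ext x
    simp only [mem_ofPred_eq, mem_iUnion]
    constructor
    · rintro ⟨n, hn⟩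
      exact ⟨n, hn.trans_le (birkhoffSum_succ_le_maxBirkhoffSum le_rfl x)⟩
    · rintro ⟨N, hN⟩
      obtain ⟨n, -, heq⟩ := exists_birkhoffSum_succ_eq_maxBirkhoffSum (T := T) (f := f) N x
      exact ⟨n, heq ▸ hN⟩
  have hmono : Monotone fun N => {x | 0 < maxBirkhoffSum T f N x} :=
    monotone_nat_of_le_succ fun N x hx => hx.trans_le (maxBirkhoffSum_le_succ N x)
  rw [hunion]
  exact ge_of_tendsto' (tendsto_setIntegral_of_monotone
    (fun N => measurableSet_lt measurable_const (measurable_maxBirkhoffSum hT.measurable hf N))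
    hmono hfi.integrableOn) (setIntegral_maxBirkhoffSum_pos_nonneg hT hf hfi)

end MaximalErgodic

theorem bddAbove_birkhoffSum_apply_iff (T : X → X) (h : X → ℝ) (x : X) :
    BddAbove (range fun n => birkhoffSum T h n (T x)) ↔
      BddAbove (range fun n => birkhoffSum T h n x) := by
  simp only [bddAbove_def, forall_mem_range]
  constructor
  · rintro ⟨M, hM⟩
    refine ⟨max 0 (h x + M), fun n => ?_⟩
    rcases n with _ | n
    · simp [birkhoffSum_zero]
    · rw [birkhoffSum_succ']
      exact le_max_of_le_right (by linarith [hM n])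
  · rintro ⟨M, hM⟩
    exact ⟨M - h x, fun n => by linarith [hM (n + 1), birkhoffSum_succ' T h n x]⟩

section RatioErgodic

variable [MeasurableSpace X] {μ : Measure X} {T : X → X} {f g h : X → ℝ}

theorem ae_bddAbove_birkhoffSum_of_measurable (hT : Ergodic T μ) (hh : Measurable h)
    (hhi : Integrable h μ) (hneg : ∫ x, h x ∂μ < 0) :
    ∀ᵐ x ∂μ, BddAbove (range fun n => birkhoffSum T h n x) := by
  set B := {x | BddAbove (range fun n => birkhoffSum T h n x)}
  have hB : MeasurableSet B :=
    measurableSet_bddAbove_range fun n => Finset.measurable_sum _ fun k _ =>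
      hh.comp (hT.measurable.iterate k)
  have hTB : T ⁻¹' B = B := Set.ext fun x => bddAbove_birkhoffSum_apply_iff T h x
  rcases hT.ae_empty_or_univ hB hTB with hB_null | hB_univ
  swap
  · exact hB_univ.mem_iff.mono fun x hx => hx.2 trivial
  exfalso
  have hpos : ∀ᵐ x ∂μ, x ∈ {x | ∃ n, 0 < birkhoffSum T h (n + 1) x} := by
    filter_upwards [ae_eq_empty.mp hB_null |> measure_eq_zero_iff_ae_notMem.mp] with x hx
    obtain ⟨_, ⟨n, rfl⟩, hn⟩ := not_bddAbove_iff.mp hx 0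
    rcases n with _ | n
    · simp at hn
    · exact ⟨n, hn⟩
  have := setIntegral_exists_birkhoffSum_pos_nonneg hT.toMeasurePreserving hh hhi
  rw [setIntegral_eq_integral_of_ae_compl_eq_zero (hpos.mono fun x hx hx' => absurd hx hx')]
    at this
  linarith

theorem ae_bddAbove_birkhoffSum (hT : Ergodic T μ) (hhi : Integrable h μ)
    (hneg : ∫ x, h x ∂μ < 0) :
    ∀ᵐ x ∂μ, BddAbove (range fun n => birkhoffSum T h n x) := by
  set h' := hhi.aemeasurable.mk h
  have hhh' : h =ᵐ[μ] h' := hhi.aemeasurable.ae_eq_mk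
  have hsum : ∀ᵐ x ∂μ, ∀ n, birkhoffSum T h n x = birkhoffSum T h' n x :=
    ae_all_iff.2 fun n => hT.toMeasurePreserving.quasiMeasurePreserving.birkhoffSum_ae_eq_of_ae_eq hhh' n
  filter_upwards [hsum, ae_bddAbove_birkhoffSum_of_measurable hT hhi.aemeasurable.measurable_mk
    (hhi.congr hhh') (integral_congr_ae hhh' ▸ hneg)] with x hx hbdd
  simpa only [hx] using hbdd

theorem ae_eventually_birkhoffSum_div_lt (hT : Ergodic T μ) (hf : Integrable f μ)
    (hg : Integrable g μ) (hg_pos : 0 < ∫ x, g x ∂μ)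
    (hg_top : ∀ᵐ x ∂μ, Tendsto (fun n => birkhoffSum T g n x) atTop atTop)
    {c : ℝ} (hc : (∫ x, f x ∂μ) / ∫ x, g x ∂μ < c) :
    ∀ᵐ x ∂μ, ∀ᶠ n in atTop, birkhoffSum T f n x / birkhoffSum T g n x < c := by
  obtain ⟨c', hc'_gt, hc'_lt⟩ := exists_between hc
  have hneg : ∫ x, (f - c' • g) x ∂μ < 0 := by
    simp only [Pi.sub_apply, Pi.smul_apply, smul_eq_mul]
    rw [integral_sub hf (hg.const_mul c'), integral_const_mul]
    linarith [(div_lt_iff₀ hg_pos).mp hc'_gt]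
  filter_upwards [ae_bddAbove_birkhoffSum hT (hf.sub (hg.smul c')) hneg, hg_top]
    with x ⟨M, hM⟩ hx
  filter_upwards [hx.eventually_gt_atTop 0,
    (hx.const_mul_atTop (sub_pos.mpr hc'_lt)).eventually_gt_atTop M] with n hn_pos hn_big
  have hn_le : birkhoffSum T f n x - c' * birkhoffSum T g n x ≤ M := by
    simpa [birkhoffSum_sub, birkhoffSum, Finset.mul_sum] using hM (mem_range_self n)
  rw [div_lt_iff₀ hn_pos]
  linarith

/-- Hopf's ratio ergodic theorem. -/
theorem ae_tendsto_birkhoffSum_div_birkhoffSum (hT : Ergodic T μ) (hf : Integrable f μ)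
    (hg : Integrable g μ) (hg_pos : 0 < ∫ x, g x ∂μ)
    (hg_top : ∀ᵐ x ∂μ, Tendsto (fun n => birkhoffSum T g n x) atTop atTop) :
    ∀ᵐ x ∂μ, Tendsto (fun n => birkhoffSum T f n x / birkhoffSum T g n x) atTop
      (𝓝 ((∫ x, f x ∂μ) / ∫ x, g x ∂μ)) := by
  have upper : ∀ {f : X → ℝ}, Integrable f μ → ∀ᵐ x ∂μ, ∀ q : ℚ,
      (∫ x, f x ∂μ) / ∫ x, g x ∂μ < q →
        ∀ᶠ n in atTop, birkhoffSum T f n x / birkhoffSum T g n x < q := fun hf =>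
    ae_all_iff.2 fun q => (em _).elim
      (fun hq => (ae_eventually_birkhoffSum_div_lt hT hf hg hg_pos hg_top hq).mono
        fun _ hx _ => hx)
      (fun hq => .of_forall fun _ hq' => absurd hq' hq)
  filter_upwards [upper hf, upper hf.neg] with x hx_upper hx_lower
  simp only [Pi.neg_apply, integral_neg, birkhoffSum_neg, neg_div] at hx_lower
  refine tendsto_order.2 ⟨fun a ha => ?_, fun a ha => ?_⟩
  · obtain ⟨q, hq_gt, hq_lt⟩ := exists_rat_btwn (neg_lt_neg ha)
    exact (hx_lower q hq_gt).mono fun n hn => by linarith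
  · obtain ⟨q, hq_gt, hq_lt⟩ := exists_rat_btwn ha
    exact (hx_upper q hq_gt).mono fun n hn => hn.trans hq_lt

end RatioErgodic

theorem tendsto_div_succ_of_tendsto_div {u v : ℕ → ℝ} {L : ℝ}
    (h : Tendsto (fun n => u n / v n) atTop (𝓝 L)) (hv : Tendsto v atTop atTop)
    (hv_mono : ∀ n, v n ≤ v (n + 1)) (hv_step : ∀ n, v (n + 1) ≤ v n + 1) :
    Tendsto (fun n => u n / v (n + 1)) atTop (𝓝 L) := by
  have hv' : Tendsto (fun n => v (n + 1)) atTop atTop := hv.comp (tendsto_add_atTop_nat 1)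
  have hgap : Tendsto (fun n => (v (n + 1) - v n) / v (n + 1)) atTop (𝓝 0) := by
    refine squeeze_zero' ?_ ?_ (tendsto_inv_atTop_zero.comp hv')
    · filter_upwards [hv'.eventually_gt_atTop 0] with n hn
      exact div_nonneg (sub_nonneg.2 (hv_mono n)) hn.le
    · filter_upwards [hv'.eventually_gt_atTop 0] with n hn
      rw [Function.comp_apply, ← one_div]
      exact div_le_div_of_nonneg_right (by linarith [hv_step n]) hn.le
  have hratio : Tendsto (fun n => v n / v (n + 1)) atTop (𝓝 1) := by
    refine (sub_zero (1 : ℝ) ▸ tendsto_const_nhds.sub hgap).congr' ?_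
    filter_upwards [hv'.eventually_gt_atTop 0] with n hn
    field_simp
    ring
  refine mul_one L ▸ (h.mul hratio).congr' ?_
  filter_upwards [hv.eventually_gt_atTop 0] with n hn
  field_simp

theorem tendsto_birkhoffSum_indicator_atTop {T : X → X} {s : Set X} {x : X}
    (hx : ∃ᶠ n in atTop, T^[n] x ∈ s) :
    Tendsto (fun n => birkhoffSum T (s.indicator (1 : X → ℝ)) n x) atTop atTop := by
  classical
  have hcount : ∀ n,
      birkhoffSum T (s.indicator 1) n x = (Nat.count (fun k => T^[k] x ∈ s) n : ℝ) := by
    intro n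
    simp [birkhoffSum, Set.indicator_apply, Nat.count_eq_card_filter_range, Finset.sum_boole]
  simp_rw [hcount]
  refine tendsto_natCast_atTop_atTop.comp
    (tendsto_atTop_atTop_of_monotone (Nat.count_monotone _) fun n => ?_)
  obtain ⟨m, hm⟩ :=
    Nat.surjective_count_of_infinite_setOfPred (Nat.frequently_atTop_iff_infinite.1 hx) n
  exact ⟨m, hm.ge⟩

theorem cast_visits (T : X → X) (E : Set X) (N : ℕ) (x : X) :
    (visits T E N x : ℝ) = birkhoffSum T (E.indicator 1) (N + 1) x := by
  simp only [visits, birkhoffSum, Nat.cast_sum]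
  refine Finset.sum_congr rfl fun k _ => ?_
  by_cases hk : T^[k] x ∈ E <;> simp [hk]

section Recurrence

variable [MeasurableSpace X] {μ : Measure X} {T : X → X} {s : Set X}

theorem _root_.MeasureTheory.Conservative.ae_frequently_iterate_mem (hc : Conservative T μ)
    (he : PreErgodic T μ) (hs : MeasurableSet s) (h0 : μ s ≠ 0) :
    ∀ᵐ x ∂μ, ∃ᶠ n in atTop, T^[n] x ∈ s := by
  set W := {x | ∃ᶠ n in atTop, T^[n] x ∈ s}
  have hW : MeasurableSet W := by
    have : W = limsup (fun n => T^[n] ⁻¹' s) atTop := by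
      ext x
      simp [W, mem_limsup_iff_frequently_mem]
    exact this ▸ .measurableSet_limsup fun n => hs.preimage (hc.measurable.iterate n)
  have hTW : T ⁻¹' W = W := by
    ext x
    conv_rhs => rw [mem_ofPred_eq, ← map_add_atTop_eq_nat 1, frequently_map]
    rfl
  rcases he.ae_empty_or_univ hW hTW with hW_null | hW_univ
  swap
  · exact hW_univ.mem_iff.mono fun x hx => hx.2 trivial
  refine absurd (measure_mono_null_ae ?_ (ae_eq_empty.mp hW_null)) h0
  exact (hc.ae_mem_imp_frequently_image_mem hs.nullMeasurableSet).mono fun x hx hxs => hx hxs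

end Recurrence

theorem statement11_general {X : Type*} [MeasurableSpace X] (μ : Measure X)
    (T : X → X) (hTcons : Conservative T μ) (hTerg : Ergodic T μ)
    (E : Set X) (hEmeas : MeasurableSet E) (hE1 : μ E = 1)
    (f : X → ℝ) (hf : Integrable f μ) :
    ∀ᵐ x ∂μ.restrict E, Tendsto
      (fun N : ℕ => (∑ k ∈ Finset.range (N + excursionM T E N x), f (T^[k] x)) /
        (visitsM T E N x : ℝ))
      atTop (𝓝 (∫ y, f y ∂μ)) := by
  have hE_integrable : Integrable (E.indicator (1 : X → ℝ)) μ :=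
    (integrableOn_const (C := (1 : ℝ)) (by simp [hE1])).integrable_indicator hEmeas
  have hE_int : ∫ x, E.indicator (1 : X → ℝ) x ∂μ = 1 := by
    simp [integral_indicator_one hEmeas, measureReal_def, hE1]
  have hvisits : ∀ᵐ x ∂μ, Tendsto (fun n => birkhoffSum T (E.indicator 1) n x) atTop atTop :=
    (hTcons.ae_frequently_iterate_mem hTerg.toPreErgodic hEmeas (by simp [hE1])).mono
      fun x hx => tendsto_birkhoffSum_indicator_atTop hx
  have hratio := ae_tendsto_birkhoffSum_div_birkhoffSum hTerg hf hE_integrable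
    (by simp [hE_int]) hvisits
  refine ae_restrict_of_ae ?_
  filter_upwards [hratio, hvisits] with x hx_ratio hx_visits
  rw [hE_int, div_one] at hx_ratio
  have hshift := tendsto_div_succ_of_tendsto_div hx_ratio hx_visits
    (fun n => by rw [birkhoffSum_succ]; simp [indicator_nonneg])
    (fun n => by
      rw [birkhoffSum_succ]
      exact add_le_add le_rfl (indicator_apply_le' (fun _ => le_rfl) fun _ => zero_le_one))
  have hlength : Tendsto (fun N => N + excursionM T E N x) atTop atTop :=
    tendsto_atTop_mono (fun N => N.le_add_right _) tendsto_id
  refine (hshift.comp hlength).congr fun N => ?_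
  simp [visitsM, cast_visits, birkhoffSum]

/-- Lemma 4.1 (lem-hopf): for integrable `f`, the Birkhoff sums over `N + m(N,E,x)`
steps, normalised by the number of visits `R_{E,N,m}(x)`, converge a.e. on `E` to
`∫ f dμ`. -/
theorem statement11 {X : Type*} [MeasurableSpace X] (μ : Measure X) [SigmaFinite μ]
    (T : X → X) (hTcons : Conservative T μ) (hTerg : Ergodic T μ)
    (hXinf : μ Set.univ = ∞)
    (E : Set X) (hEmeas : MeasurableSet E) (hE1 : μ E = 1)
    (f : X → ℝ) (hf : Integrable f μ) :
    ∀ᵐ x ∂μ.restrict E, Tendsto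
      (fun N : ℕ => (∑ k ∈ Finset.range (N + excursionM T E N x), f (T^[k] x)) /
        (visitsM T E N x : ℝ))
      atTop (𝓝 (∫ y, f y ∂μ)) :=
  statement11_general μ T hTcons hTerg E hEmeas hE1 f hf

end Paper
end
end

section
/- For μ-a.e. x ∈ E it eventually holds (for all N large enough) that N < τ¹_{E,x}(R_{E,N,m}(x)) ≤ N + M²_{N,m}(x), where M²_{N,m}(x) denotes the second maximum of {φ_E(T_E^{k−1}(x)) : k = 1,…,R_{E,N,m}(x)}, which may coincide with the maximum in case of equality. -/
/-!
For almost every `x ∈ E` the orbit returns to `E` infinitely often (conservativity), and then the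
return times `τ(n)` enumerate the visits to `E`: `R_{E,N}(x)` is the number of `n` with
`τ(n) ≤ N`, and `m(N,E,x)` is the largest of the first `R = R_{E,N}(x)` return times. Hence
`τ(R) ≤ N + m`, so `R' = R_{E,N,m}(x) > R`. The trimmed sum `τ(R') - max` exceeds `N`: either the
maximum is one of the first `R` return times, so it is at most `m < τ(R') - N`, or it comes later
and removing it still leaves `τ(R) > N`. It is at most `N + M²`, because
`τ(R') ≤ N + m + φ_E(T_E^{R'-1} x)` and `m`, `φ_E(T_E^{R'-1} x)` are two return times with distinct
indices, both bounded by the maximum.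
-/

open MeasureTheory Filter Set Topology Asymptotics

open scoped ENNReal NNReal

noncomputable section

namespace Paper

variable {X : Type*}

section ReturnTimes

variable {T : X → X} {E : Set X} {x : X}

lemma tauRet_succ (n : ℕ) :
    tauRet T E x (n + 1) = tauRet T E x n + retTime T E ((indMap T E)^[n] x) :=
  Finset.sum_range_succ _ n

lemma tauRet_mono : Monotone (tauRet T E x) := fun _ _ h =>
  Finset.sum_le_sum_of_subset (Finset.range_subset_range.2 h)

lemma iterate_tauRet (n : ℕ) : T^[tauRet T E x n] x = (indMap T E)^[n] x := by
  induction n with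
  | zero => rfl
  | succ n ih =>
    rw [tauRet_succ, add_comm, Function.iterate_add_apply, ih,
      Function.iterate_succ_apply']
    rfl

lemma iterate_notMem_of_lt_retTime {y : X} {j : ℕ} (hj : 0 < j) (hjy : j < retTime T E y) :
    T^[j] y ∉ E := fun hy => Nat.notMem_of_lt_sInf hjy ⟨hj, hy⟩

lemma retTime_spec {y : X} (h : ∃ k, 0 < k ∧ T^[k] y ∈ E) :
    0 < retTime T E y ∧ T^[retTime T E y] y ∈ E :=
  Nat.sInf_mem h

lemma visits_eq_count [DecidablePred (fun k => T^[k] x ∈ E)] (N : ℕ) :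
    visits T E N x = Nat.count (fun k => T^[k] x ∈ E) (N + 1) := by
  simp only [visits, Nat.count_eq_card_filter_range, Finset.card_filter, Set.indicator_apply]

lemma count_tauRet [DecidablePred (fun k => T^[k] x ∈ E)] (hx : x ∈ E)
    (hrec : ∃ᶠ k in atTop, T^[k] x ∈ E) (n : ℕ) :
    Nat.count (fun k => T^[k] x ∈ E) (tauRet T E x n) = n ∧ T^[tauRet T E x n] x ∈ E := by
  classical
  induction n with
  | zero => exact ⟨rfl, hx⟩
  | succ n ih =>
    obtain ⟨hcount, hmem⟩ := ih
    set y := (indMap T E)^[n] x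
    have hshift (k : ℕ) : T^[tauRet T E x n + k] x = T^[k] y := by
      rw [add_comm, Function.iterate_add_apply, iterate_tauRet]
    obtain ⟨a, ha, haE⟩ := (frequently_atTop.1 hrec) (tauRet T E x n + 1)
    obtain ⟨hpos, hret⟩ : 0 < retTime T E y ∧ T^[retTime T E y] y ∈ E :=
      retTime_spec ⟨a - tauRet T E x n, by omega, by rwa [← hshift, Nat.add_sub_cancel' (by omega)]⟩
    obtain ⟨r, hr⟩ := Nat.exists_eq_succ_of_ne_zero hpos.ne'
    have hy : y ∈ E := by rwa [iterate_tauRet] at hmem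
    have hnext : Nat.count (fun k => T^[k] y ∈ E) (retTime T E y) = 1 := by
      rw [hr, Nat.count_succ', Nat.count_of_forall_not fun m hm =>
        iterate_notMem_of_lt_retTime (Nat.succ_pos m) (by omega)]
      simp [hy]
    refine ⟨?_, by rwa [tauRet_succ, hshift]⟩
    rw [tauRet_succ, Nat.count_add, hcount]
    simp only [hshift]
    exact congrArg (n + ·) hnext

lemma tauRet_le_iff_lt_visits (hx : x ∈ E) (hrec : ∃ᶠ k in atTop, T^[k] x ∈ E) {n N : ℕ} :
    tauRet T E x n ≤ N ↔ n < visits T E N x := by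
  classical
  obtain ⟨hcount, hmem⟩ := count_tauRet hx hrec n
  rw [visits_eq_count]
  constructor
  · intro h
    calc n < Nat.count _ (tauRet T E x n + 1) := by
          rw [Nat.count_succ, hcount, if_pos hmem]; omega
      _ ≤ _ := Nat.count_monotone _ (by omega)
  · intro h
    by_contra! hlt
    have := Nat.count_monotone (fun k => T^[k] x ∈ E) (show N + 1 ≤ tauRet T E x n by omega)
    omega

lemma le_maxRet {n k : ℕ} (hk : k < n) :
    retTime T E ((indMap T E)^[k] x) ≤ maxRet T E x n :=
  Finset.le_sup (f := fun k => retTime T E ((indMap T E)^[k] x)) (Finset.mem_range.2 hk)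

lemma exists_eq_maxRet {n : ℕ} (hn : 0 < n) :
    ∃ k < n, retTime T E ((indMap T E)^[k] x) = maxRet T E x n := by
  obtain ⟨k, hk, he⟩ := Finset.exists_mem_eq_sup (Finset.range n)
    (Finset.nonempty_range_iff.2 hn.ne') fun k => retTime T E ((indMap T E)^[k] x)
  exact ⟨k, Finset.mem_range.1 hk, he.symm⟩

lemma min_le_secondMaxRet {n k₁ k₂ : ℕ} (h₁ : k₁ < n) (h₂ : k₂ < n) (hne : k₁ ≠ k₂) :
    min (retTime T E ((indMap T E)^[k₁] x)) (retTime T E ((indMap T E)^[k₂] x))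
      ≤ secondMaxRet T E x n := by
  refine le_csSup ⟨maxRet T E x n, ?_⟩ ⟨k₁, h₁, k₂, h₂, hne, rfl⟩
  rintro v ⟨j₁, hj₁, j₂, -, -, rfl⟩
  exact (min_le_left _ _).trans (le_maxRet hj₁)

lemma tauRetTrim_bounds {N R R' : ℕ} (hR : ∀ n, tauRet T E x n ≤ N ↔ n < R)
    (hR' : ∀ n, tauRet T E x n ≤ N + maxRet T E x R ↔ n < R') :
    N < tauRetTrim T E x R' ∧ tauRetTrim T E x R' ≤ N + secondMaxRet T E x R' := by
  set m := maxRet T E x R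
  have hRpos : 0 < R := (hR 0).1 (Nat.zero_le N)
  have hτR : N < tauRet T E x R := not_le.1 fun h => lt_irrefl R ((hR R).1 h)
  obtain ⟨i, hiR, hi⟩ := exists_eq_maxRet (T := T) (E := E) (x := x) hRpos
  have hRR' : R < R' := (hR' R).1 <| by
    obtain ⟨r, rfl⟩ := Nat.exists_eq_add_one_of_ne_zero hRpos.ne'
    have := (hR r).2 r.lt_add_one
    have := le_maxRet (T := T) (E := E) (x := x) r.lt_add_one
    rw [tauRet_succ]
    omega
  have hτR' : N + m < tauRet T E x R' := not_le.1 fun h => lt_irrefl R' ((hR' R').1 h)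
  obtain ⟨k, hkR', hk⟩ := exists_eq_maxRet (T := T) (E := E) (x := x) (hRpos.trans hRR')
  have htrim : tauRetTrim T E x R' = tauRet T E x R' - retTime T E ((indMap T E)^[k] x) := by
    rw [tauRetTrim, hk]
  rw [htrim]
  constructor
  · rcases lt_or_ge k R with hkR | hRk
    · have := le_maxRet (T := T) (E := E) (x := x) hkR
      omega
    · have := tauRet_succ (T := T) (E := E) (x := x) k
      have := tauRet_mono (T := T) (E := E) (x := x) (show k + 1 ≤ R' by omega)
      have := tauRet_mono (T := T) (E := E) (x := x) hRk
      omega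
  · have hlast := tauRet_succ (T := T) (E := E) (x := x) (R' - 1)
    rw [Nat.sub_add_cancel (hRpos.trans hRR')] at hlast
    have := (hR' (R' - 1)).2 (by omega)
    have := min_le_secondMaxRet (T := T) (E := E) (x := x) (hiR.trans hRR')
      (show R' - 1 < R' by omega) (show i ≠ R' - 1 by omega)
    have := le_maxRet (T := T) (E := E) (x := x) (hiR.trans hRR')
    have := le_maxRet (T := T) (E := E) (x := x) (show R' - 1 < R' by omega)
    omega

lemma retTime_iterate_indMap_pos (hx : x ∈ E) (hrec : ∃ᶠ k in atTop, T^[k] x ∈ E) (n : ℕ) :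
    0 < retTime T E ((indMap T E)^[n] x) := by
  classical
  refine Nat.pos_of_ne_zero fun h => ?_
  have := (count_tauRet hx hrec (n + 1)).1
  rw [tauRet_succ, h, add_zero, (count_tauRet hx hrec n).1] at this
  omega

/-- The excursion lies inside the gap between two consecutive returns, the earlier of which
happens by time `N`. -/
lemma add_one_le_maxRet_of_excursion (hx : x ∈ E) (hrec : ∃ᶠ k in atTop, T^[k] x ∈ E)
    {N k ℓ : ℕ} (hℓ : 1 ≤ ℓ) (hℓN : ℓ ≤ N + 1) (hout : ∀ j < k, T^[ℓ + j] x ∉ E) :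
    k + 1 ≤ maxRet T E x (visits T E N x) := by
  classical
  set n := visits T E (ℓ - 1) x - 1
  have hV : 0 < visits T E (ℓ - 1) x := (tauRet_le_iff_lt_visits hx hrec).1 (Nat.zero_le _)
  have hn : tauRet T E x n ≤ ℓ - 1 := (tauRet_le_iff_lt_visits hx hrec).2 (by omega)
  have hn1 : ℓ - 1 < tauRet T E x (n + 1) :=
    not_le.1 fun h => by have := (tauRet_le_iff_lt_visits hx hrec).1 h; omega
  have hnR : n < visits T E N x := (tauRet_le_iff_lt_visits hx hrec).1 (by omega)
  have hend : ℓ + k ≤ tauRet T E x (n + 1) := by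
    by_contra! h
    apply hout (tauRet T E x (n + 1) - ℓ) (by omega)
    rw [Nat.add_sub_cancel' (by omega)]
    exact (count_tauRet hx hrec (n + 1)).2
  have := tauRet_succ (T := T) (E := E) (x := x) n
  have := le_maxRet (T := T) (E := E) (x := x) hnR
  omega

lemma excursionM_eq_maxRet (hx : x ∈ E) (hrec : ∃ᶠ k in atTop, T^[k] x ∈ E) (N : ℕ) :
    excursionM T E N x = maxRet T E x (visits T E N x) := by
  set M := maxRet T E x (visits T E N x)
  have hRpos : 0 < visits T E N x := (tauRet_le_iff_lt_visits hx hrec).1 (Nat.zero_le N)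
  obtain ⟨i, hiR, hi⟩ := exists_eq_maxRet (T := T) (E := E) (x := x) hRpos
  have hM : 0 < M := (retTime_iterate_indMap_pos hx hrec i).trans_eq hi
  rw [excursionM]
  set K : Set ℕ := {k | 1 ≤ k ∧ ∃ ℓ, 1 ≤ ℓ ∧ ℓ ≤ N + 1 ∧ ∀ j < k, T^[ℓ + j] x ∉ E}
  have hbound : M - 1 ∈ upperBounds K := by
    rintro k ⟨-, ℓ, hℓ, hℓN, hout⟩
    have := add_one_le_maxRet_of_excursion hx hrec hℓ hℓN hout
    omega
  have hsSup := csSup_le' hbound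
  rcases le_or_gt M 1 with hM1 | hM1
  · omega
  · have hiN : tauRet T E x i ≤ N := (tauRet_le_iff_lt_visits hx hrec).2 hiR
    have hmem : M - 1 ∈ K := by
      refine ⟨by omega, tauRet T E x i + 1, by omega, by omega, fun j hj => ?_⟩
      rw [add_assoc, add_comm, Function.iterate_add_apply, iterate_tauRet]
      exact iterate_notMem_of_lt_retTime (by omega) (by omega)
    have := le_csSup ⟨M - 1, hbound⟩ hmem
    omega

end ReturnTimes

theorem statement12_general {X : Type*} [MeasurableSpace X] (μ : Measure X)
    (T : X → X) (hTcons : Conservative T μ)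
    (E : Set X) (hEmeas : MeasurableSet E) :
    ∀ᵐ x ∂μ.restrict E, ∀ᶠ N : ℕ in atTop,
      N < tauRetTrim T E x (visitsM T E N x) ∧
      tauRetTrim T E x (visitsM T E N x) ≤ N + secondMaxRet T E x (visitsM T E N x) := by
  filter_upwards [ae_restrict_mem hEmeas, ae_restrict_of_ae
    (hTcons.ae_mem_imp_frequently_image_mem hEmeas.nullMeasurableSet)] with x hx hrec
  refine Eventually.of_forall fun N => ?_
  rw [visitsM, excursionM_eq_maxRet hx (hrec hx)]
  exact tauRetTrim_bounds (fun _ => tauRet_le_iff_lt_visits hx (hrec hx))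
    (fun _ => tauRet_le_iff_lt_visits hx (hrec hx))

/-- Lemma 4.2 (useful-1): for a.e. `x ∈ E`, eventually
`N < τ¹_{E,x}(R_{E,N,m}(x)) ≤ N + M²_{N,m}(x)`. -/
theorem statement12 {X : Type*} [MeasurableSpace X] (μ : Measure X) [SigmaFinite μ]
    (T : X → X) (hTcons : Conservative T μ) (hTerg : Ergodic T μ)
    (hXinf : μ Set.univ = ∞)
    (E : Set X) (hEmeas : MeasurableSet E) (hE1 : μ E = 1) :
    ∀ᵐ x ∂μ.restrict E, ∀ᶠ N : ℕ in atTop,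
      N < tauRetTrim T E x (visitsM T E N x) ∧
      tauRetTrim T E x (visitsM T E N x) ≤ N + secondMaxRet T E x (visitsM T E N x) :=
  statement12_general μ T hTcons E hEmeas
end Paper
end
end

section
/- Let (a_n) and (b_n) be two sequences of non-negative real numbers, at least one of them diverging to infinity, and let L be a non-negative slowly varying function such that n ↦ n L(n) is non-decreasing. Then a_n L(a_n) + b_n L(b_n) ~ (a_n + b_n) L(a_n + b_n) as n → ∞. -/
open MeasureTheory Filter Set Topology Asymptotics

open scoped ENNReal NNReal

noncomputable section

/-! With `f x = x * L x`, the functions `t ↦ f (t * x) / f x` are monotone on `[0, 1]` and, by slow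
variation, converge pointwise to `t` as `x → ∞`; as in Pólya's theorem, monotonicity upgrades this
to uniform convergence on `[0, 1]`. For `s = a + b`, the ratio in question is
`f ((a / s) * s) / f s + f ((b / s) * s) / f s = a / s + b / s + o(1) = 1 + o(1)`. -/

theorem TendstoUniformlyOn.tendsto_sub_comp {ι α β γ : Type*} [SeminormedAddCommGroup β]
    {F : ι → α → β} {f : α → β} {p : Filter ι} {s : Set α}
    (h : TendstoUniformlyOn F f p s) {q : Filter γ} {u : γ → ι} {v : γ → α}
    (hu : Tendsto u q p) (hv : ∀ᶠ n in q, v n ∈ s) :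
    Tendsto (fun n => F (u n) (v n) - f (v n)) q (𝓝 0) := by
  rw [Metric.tendsto_nhds]
  intro ε hε
  filter_upwards [hu.eventually (Metric.tendstoUniformlyOn_iff.mp h ε hε), hv] with n hn hvn
  simpa [dist_eq_norm, norm_sub_rev] using hn (v n) hvn

theorem tendstoUniformlyOn_id_Icc_of_monotoneOn {ι : Type*} {p : Filter ι} {g : ι → ℝ → ℝ}
    (hmono : ∀ᶠ i in p, MonotoneOn (g i) (Icc 0 1))
    (hlim : ∀ t ∈ Icc (0 : ℝ) 1, Tendsto (fun i => g i t) p (𝓝 t)) :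
    TendstoUniformlyOn g id p (Icc 0 1) := by
  rw [Metric.tendstoUniformlyOn_iff]
  intro ε hε
  obtain ⟨n, hn⟩ := exists_nat_gt (2 / ε)
  have hn0 : (0 : ℝ) < n := lt_trans (by positivity) hn
  have hmesh : 1 / (n : ℝ) < ε / 2 := by
    rw [div_lt_iff₀ hn0]; rw [div_lt_iff₀ hε] at hn; linarith
  have hgrid : ∀ k ∈ Finset.range (n + 1), ∀ᶠ i in p, |g i (k / n) - k / n| < ε / 2 := by
    intro k hk
    have hk : (k : ℝ) / n ∈ Icc (0 : ℝ) 1 := by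
      refine ⟨by positivity, div_le_one_of_le₀ ?_ hn0.le⟩
      exact_mod_cast Finset.mem_range_succ_iff.mp hk
    exact Metric.tendsto_nhds.mp (hlim _ hk) _ (half_pos hε)
  filter_upwards [hmono, (Finset.eventually_all _).mpr hgrid] with i hmi hgi t ht
  -- `g i t` is squeezed between its values at the grid points `⌊t n⌋ / n ≤ t ≤ ⌈t n⌉ / n`.
  rw [dist_comm, Real.dist_eq, abs_sub_lt_iff]
  have htn : 0 ≤ t * n := mul_nonneg ht.1 hn0.le
  have hfloor : ⌊t * n⌋₊ ≤ n := Nat.floor_le_of_le (by nlinarith [ht.2])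
  have hceil : ⌈t * n⌉₊ ≤ n := Nat.ceil_le.mpr (by nlinarith [ht.2])
  have hfloor_mem : (⌊t * n⌋₊ : ℝ) / n ∈ Icc (0 : ℝ) 1 :=
    ⟨by positivity, div_le_one_of_le₀ (by exact_mod_cast hfloor) hn0.le⟩
  have hceil_mem : (⌈t * n⌉₊ : ℝ) / n ∈ Icc (0 : ℝ) 1 :=
    ⟨by positivity, div_le_one_of_le₀ (by exact_mod_cast hceil) hn0.le⟩
  have hlow := abs_sub_lt_iff.mp (hgi _ (Finset.mem_range_succ_iff.mpr hfloor))
  have hupp := abs_sub_lt_iff.mp (hgi _ (Finset.mem_range_succ_iff.mpr hceil))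
  have hfloor_le : (⌊t * n⌋₊ : ℝ) / n ≤ t := (div_le_iff₀ hn0).mpr (Nat.floor_le htn)
  have hle_ceil : t ≤ (⌈t * n⌉₊ : ℝ) / n := (le_div_iff₀ hn0).mpr (Nat.le_ceil _)
  have hfloor_gt : t - 1 / n < (⌊t * n⌋₊ : ℝ) / n := by
    rw [lt_div_iff₀ hn0, sub_mul, one_div_mul_cancel hn0.ne']
    linarith [Nat.lt_floor_add_one (t * n)]
  have hceil_lt : (⌈t * n⌉₊ : ℝ) / n < t + 1 / n := by
    rw [div_lt_iff₀ hn0, add_mul, one_div_mul_cancel hn0.ne']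
    linarith [Nat.ceil_lt_add_one htn]
  have hg_floor := hmi hfloor_mem ht hfloor_le
  have hg_ceil := hmi ht hceil_mem hle_ceil
  constructor <;> simp only [id] <;> linarith

namespace Paper

theorem SlowlyVarying.eventually_ne_zero {L : ℝ → ℝ} (hL : SlowlyVarying L) :
    ∀ᶠ x in atTop, L x ≠ 0 := by
  filter_upwards [(hL 1 one_pos).eventually_ne one_ne_zero] with x hx hLx
  simp [hLx] at hx

theorem SlowlyVarying.tendstoUniformlyOn_mul_div {L : ℝ → ℝ} (hL : SlowlyVarying L)
    (hL0 : ∀ x : ℝ, 0 < x → 0 ≤ L x) (hmono : MonotoneOn (fun x : ℝ => x * L x) (Ici 0)) :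
    TendstoUniformlyOn (fun x t => t * x * L (t * x) / (x * L x)) id atTop (Icc 0 1) := by
  refine tendstoUniformlyOn_id_Icc_of_monotoneOn ?_ fun t ht => ?_
  · filter_upwards [eventually_gt_atTop 0, hL.eventually_ne_zero] with x hx hLx
    have hxL : 0 < x * L x := mul_pos hx ((hL0 x hx).lt_of_ne' hLx)
    intro t ht t' ht' htt'
    exact div_le_div_of_nonneg_right
      (hmono (mul_nonneg ht.1 hx.le) (mul_nonneg ht'.1 hx.le) (by gcongr)) hxL.le
  · rcases ht.1.eq_or_lt with rfl | ht0
    · simp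
    · have hlim : Tendsto (fun x => t * (L (t * x) / L x)) atTop (𝓝 t) := by
        simpa using (hL t ht0).const_mul t
      refine hlim.congr' ?_
      filter_upwards [eventually_ne_atTop 0] with x hx
      rw [mul_div_mul_comm, mul_div_cancel_right₀ t hx]

/-- Lemma B.1 (lemma-somme): for non-negative sequences, at least one diverging, and a
non-negative slowly varying `L` with `x ↦ x L(x)` non-decreasing,
`aₙ L(aₙ) + bₙ L(bₙ) ∼ (aₙ + bₙ) L(aₙ + bₙ)`. -/
theorem statement16 (a b : ℕ → ℝ) (ha0 : ∀ n, 0 ≤ a n) (hb0 : ∀ n, 0 ≤ b n)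
    (hdiv : Tendsto a atTop atTop ∨ Tendsto b atTop atTop)
    (L : ℝ → ℝ) (hL0 : ∀ x : ℝ, 0 < x → 0 ≤ L x) (hL : SlowlyVarying L)
    (hmono : MonotoneOn (fun x : ℝ => x * L x) (Set.Ici 0)) :
    Tendsto (fun n : ℕ =>
        (a n * L (a n) + b n * L (b n)) / ((a n + b n) * L (a n + b n)))
      atTop (𝓝 1) := by
  set s := fun n => a n + b n
  have hs : Tendsto s atTop atTop := by
    rcases hdiv with h | h
    · exact tendsto_atTop_mono (fun n => le_add_of_nonneg_right (hb0 n)) h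
    · exact tendsto_atTop_mono (fun n => le_add_of_nonneg_left (ha0 n)) h
  have hspos : ∀ᶠ n in atTop, 0 < s n := hs.eventually_gt_atTop 0
  have hunif := hL.tendstoUniformlyOn_mul_div hL0 hmono
  have hfrac : ∀ c : ℕ → ℝ, (∀ n, 0 ≤ c n) → (∀ n, c n ≤ s n) →
      Tendsto (fun n => c n / s n * s n * L (c n / s n * s n) / (s n * L (s n)) - c n / s n)
        atTop (𝓝 0) := fun c hc0 hcs =>
    hunif.tendsto_sub_comp hs <| hspos.mono fun n hn =>
      ⟨div_nonneg (hc0 n) hn.le, div_le_one_of_le₀ (hcs n) hn.le⟩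
  have hsum := (hfrac a ha0 fun n => le_add_of_nonneg_right (hb0 n)).add
    ((hfrac b hb0 fun n => le_add_of_nonneg_left (ha0 n)).add_const 1)
  rw [zero_add, zero_add] at hsum
  refine hsum.congr' ?_
  filter_upwards [hspos] with n hn
  have hsplit : a n / s n + b n / s n = 1 := by rw [← add_div, div_self hn.ne']
  rw [div_mul_cancel₀ _ hn.ne', div_mul_cancel₀ _ hn.ne', add_div]
  linarith

end Paper
end
end
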